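/- The sequence of first differences d(n) = PPL_t(n+1) − PPL_t(n) (with PPL_t(0) = 0), which takes values in {−1, 0, 1}, is the fixed point of a 4-uniform morphism: for every n ≥ 0, d(4n) = 1, d(4n+1) = min(d(n), 0) + 1, d(4n+2) = max(d(n), 0) − 1, and d(4n+3) = −1. -/

import Mathlib

/-- The Thue–Morse word: `tm n` is the number of ones (sum of binary digits)
in the binary expansion of `n`, taken mod 2. -/
def tm (n : ℕ) : ℕ := (Nat.digits 2 n).sum % 2

/-- `ps` is a factorization of the finite word `w` into nonempty palindromes. -/
def IsPalDecomp (w : List ℕ) (ps : List (List ℕ)) : Prop :=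
  ps.flatten = w ∧ ∀ p ∈ ps, p ≠ [] ∧ p.Palindrome

/-- The palindromic length of a finite word: the least number of nonempty
palindromes whose concatenation is the word (0 for the empty word). -/
noncomputable def palLen (w : List ℕ) : ℕ :=
  sInf {k | ∃ ps, ps.length = k ∧ IsPalDecomp w ps}

/-- `pplTM n` is the palindromic length of the prefix of length `n`
of the Thue–Morse word. -/
noncomputable def pplTM (n : ℕ) : ℕ := palLen ((List.range n).map tm)

/-!
Let `Q = pplRec` be given by the 4-regular recursion `Q (4m) = Q m`, `Q (4m+1) = Q m + 1`,
`Q (4m+2) = min (Q m) (Q (m+1)) + 2`, `Q (4m+3) = Q (m+1) + 1`. The claimed recursion for the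
differences is a restatement of this one, so it suffices to show `PPL_t = Q`.

The upper bound holds because the Thue–Morse morphism maps palindromes to palindromes (so
`PPL_t (4m) ≤ PPL_t m`) and because appending or deleting a letter changes palindromic length by
at most one. For the lower bound, if `t(j) ⋯ t(n-1)` is the last palindrome of an optimal
factorization, it suffices that `Q n ≤ Q j + 1`. As `t(2k) ≠ t(2k+1)`, no letter of `t` occurs
three times in a row, so a palindrome of `t` of length at least `4` has even length, and its equal
middle letters `t(x-1) = t(x)` force `x` to be even, i.e. `4 ∣ j + n`. The reflection of the
palindrome then maps blocks of the morphism onto blocks, so it is the image of a palindrome of `t`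
about four times shorter, up to partial blocks at its ends which the recursion for `Q` absorbs;
the inequality follows by induction.
-/

theorem IsPalDecomp.append {u v : List ℕ} {ps qs : List (List ℕ)} (hu : IsPalDecomp u ps)
    (hv : IsPalDecomp v qs) : IsPalDecomp (u ++ v) (ps ++ qs) := by
  refine ⟨by rw [List.flatten_append, hu.1, hv.1], fun p hp => ?_⟩
  rcases List.mem_append.mp hp with hp | hp
  exacts [hu.2 p hp, hv.2 p hp]

theorem palLen_le {w : List ℕ} {ps : List (List ℕ)} (h : IsPalDecomp w ps) :
    palLen w ≤ ps.length :=
  Nat.sInf_le ⟨ps, rfl, h⟩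

theorem exists_isPalDecomp_length_eq_palLen (w : List ℕ) :
    ∃ ps, ps.length = palLen w ∧ IsPalDecomp w ps := by
  have hsingletons : IsPalDecomp w (w.map ([·])) := by
    refine ⟨?_, by simp [List.Palindrome.singleton]⟩
    induction w with
    | nil => rfl
    | cons a w ih => simp [ih]
  exact Nat.sInf_mem (⟨_, _, rfl, hsingletons⟩ : ∃ k, ∃ ps, ps.length = k ∧ IsPalDecomp w ps)

theorem palLen_nil : palLen [] = 0 :=
  Nat.le_zero.mp (palLen_le (ps := []) ⟨rfl, by simp⟩)

theorem palLen_le_one {p : List ℕ} (hp : p.Palindrome) : palLen p ≤ 1 := by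
  rcases eq_or_ne p [] with rfl | hne
  · simp [palLen_nil]
  · exact palLen_le (ps := [p]) ⟨by simp, by simp [hne, hp]⟩

theorem palLen_append_le (u v : List ℕ) : palLen (u ++ v) ≤ palLen u + palLen v := by
  obtain ⟨ps, hps, hu⟩ := exists_isPalDecomp_length_eq_palLen u
  obtain ⟨qs, hqs, hv⟩ := exists_isPalDecomp_length_eq_palLen v
  simpa [hps, hqs] using palLen_le (hu.append hv)

theorem palLen_flatMap_le {f : ℕ → List ℕ} (hf : ∀ a, f a ≠ [] ∧ (f a).Palindrome)
    (w : List ℕ) : palLen (w.flatMap f) ≤ palLen w := by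
  obtain ⟨ps, hps, hflat, hpal⟩ := exists_isPalDecomp_length_eq_palLen w
  have hdecomp : IsPalDecomp (w.flatMap f) (ps.map (List.flatMap f)) := by
    refine ⟨?_, ?_⟩
    · rw [← hflat]
      clear hps hflat hpal
      induction ps with
      | nil => rfl
      | cons p ps ih => simp [List.flatMap_append, ih]
    · simp only [List.mem_map, forall_exists_index, and_imp, forall_apply_eq_imp_iff₂]
      intro p hp
      obtain ⟨hne, hpp⟩ := hpal p hp
      obtain ⟨a, ha⟩ := List.exists_mem_of_ne_nil p hne
      refine ⟨fun h => (hf a).1 (List.flatMap_eq_nil_iff.mp h a ha), ?_⟩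
      have hrev : List.reverse ∘ f = f := funext fun a => (hf a).2.reverse_eq
      exact .of_reverse_eq (by rw [List.reverse_flatMap, hrev, hpp.reverse_eq])
  simpa [hps] using palLen_le hdecomp

theorem exists_append_palindrome_palLen_add_one_le {w : List ℕ} (hw : w ≠ []) :
    ∃ u p, u ++ p = w ∧ p ≠ [] ∧ p.Palindrome ∧ palLen u + 1 ≤ palLen w := by
  obtain ⟨ps, hps, hflat, hpal⟩ := exists_isPalDecomp_length_eq_palLen w
  obtain rfl | ⟨ps, p, rfl⟩ := List.eq_nil_or_concat ps
  · exact absurd hflat.symm hw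
  rw [List.concat_eq_append] at hflat hps hpal
  obtain ⟨hne, hp⟩ := hpal p (by simp)
  refine ⟨ps.flatten, p, by rw [← hflat, List.flatten_concat], hne, hp, ?_⟩
  have := palLen_le (w := ps.flatten) ⟨rfl, fun q hq => hpal q (by simp [hq])⟩
  simp only [List.length_append, List.length_singleton] at hps
  omega

theorem palLen_dropLast_le_two {p : List ℕ} (hp : p.Palindrome) : palLen p.dropLast ≤ 2 := by
  cases hp with
  | nil | singleton => simp [palLen_nil]
  | @cons_concat x q hq =>
    rw [← List.cons_append, List.dropLast_concat, ← List.singleton_append]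
    have := palLen_append_le [x] q
    have := palLen_le_one (List.Palindrome.singleton x)
    have := palLen_le_one hq
    omega

theorem palLen_le_palLen_append_singleton (w : List ℕ) (a : ℕ) :
    palLen w ≤ palLen (w ++ [a]) + 1 := by
  obtain ⟨u, p, hup, hne, hp, hlen⟩ :=
    exists_append_palindrome_palLen_add_one_le (w := w ++ [a]) (by simp)
  have hw : w = u ++ p.dropLast := by
    rw [← List.dropLast_append_of_ne_nil hne, hup, List.dropLast_concat]
  calc palLen w ≤ palLen u + palLen p.dropLast := by rw [hw]; exact palLen_append_le _ _
    _ ≤ palLen u + 2 := Nat.add_le_add_left (palLen_dropLast_le_two hp) _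
    _ ≤ palLen (w ++ [a]) + 1 := by omega

theorem tm_two_mul (k : ℕ) : tm (2 * k) = tm k := by
  rcases Nat.eq_zero_or_pos k with rfl | hk
  · rfl
  · simp [tm, Nat.digits_def' (by norm_num : 1 < 2) (by omega : 0 < 2 * k)]

theorem tm_two_mul_add_one (k : ℕ) : tm (2 * k + 1) = 1 - tm k := by
  simp only [tm, Nat.digits_def' (by norm_num : 1 < 2) (by omega : 0 < 2 * k + 1)]
  rw [show (2 * k + 1) % 2 = 1 by omega, show (2 * k + 1) / 2 = k by omega, List.sum_cons]
  omega

theorem tm_le_one (n : ℕ) : tm n ≤ 1 := Nat.le_of_lt_succ (Nat.mod_lt _ two_pos)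

theorem tm_two_mul_add_one_ne (k : ℕ) : tm (2 * k + 1) ≠ tm (2 * k) := by
  rw [tm_two_mul, tm_two_mul_add_one]
  have := tm_le_one k
  omega

theorem tm_four_mul (q : ℕ) : tm (4 * q) = tm q := by
  rw [show 4 * q = 2 * (2 * q) by ring, tm_two_mul, tm_two_mul]

theorem tm_four_mul_add_one (q : ℕ) : tm (4 * q + 1) = 1 - tm q := by
  rw [show 4 * q + 1 = 2 * (2 * q) + 1 by ring, tm_two_mul_add_one, tm_two_mul]

theorem tm_four_mul_add_two (q : ℕ) : tm (4 * q + 2) = 1 - tm q := by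
  rw [show 4 * q + 2 = 2 * (2 * q + 1) by ring, tm_two_mul, tm_two_mul_add_one]

theorem tm_four_mul_add_three (q : ℕ) : tm (4 * q + 3) = tm q := by
  rw [show 4 * q + 3 = 2 * (2 * q + 1) + 1 by ring, tm_two_mul_add_one, tm_two_mul_add_one]
  have := tm_le_one q
  omega

theorem tm_ne_or_ne_succ (f : ℕ) : tm f ≠ tm (f + 1) ∨ tm (f + 1) ≠ tm (f + 2) := by
  obtain ⟨k, rfl | rfl⟩ := Nat.even_or_odd' f
  · exact .inl (tm_two_mul_add_one_ne k).symm
  · exact .inr (tm_two_mul_add_one_ne (k + 1)).symm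

/-- Offsets `k` and `3 - k` mirror each other in the palindromic block `a (1-a) (1-a) a`. -/
theorem tm_four_mul_add_eq_iff {q q' k : ℕ} (hk : k ≤ 3) :
    tm (4 * q + k) = tm (4 * q' + (3 - k)) ↔ tm q = tm q' := by
  have := tm_le_one q
  have := tm_le_one q'
  interval_cases k <;>
    simp only [Nat.add_zero, Nat.sub_zero, Nat.sub_self, tm_four_mul, tm_four_mul_add_one,
      tm_four_mul_add_two, tm_four_mul_add_three] <;> omega

/-- `t(j) ⋯ t(n-1)` is a palindrome. -/
def IsTMPal (j n : ℕ) : Prop :=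
  ∀ i k, j ≤ i → j ≤ k → i + k + 1 = j + n → tm i = tm k

namespace IsTMPal

variable {j n : ℕ}

theorem mono {j' n' : ℕ} (h : IsTMPal j n) (hj : j ≤ j') (hsum : j' + n' = j + n) :
    IsTMPal j' n' :=
  fun i k hi hk hik => h i k (hj.trans hi) (hj.trans hk) (by omega)

theorem four_dvd_add (h : IsTMPal j n) (hjn : j < n) (heven : Even (j + n)) : 4 ∣ j + n := by
  obtain ⟨x, hx⟩ := heven
  have hmid := h (x - 1) x (by omega) (by omega) (by omega)
  obtain ⟨g, rfl | rfl⟩ := Nat.even_or_odd' x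
  · omega
  · rw [Nat.add_sub_cancel] at hmid
    exact absurd hmid.symm (tm_two_mul_add_one_ne g)

theorem le_add_three_of_odd (h : IsTMPal j n) (hodd : Odd (j + n)) : n ≤ j + 3 := by
  by_contra! hn
  obtain ⟨x, hx⟩ := hodd
  have h1 := h (x - 1) (x + 1) (by omega) (by omega) (by omega)
  have h2 := h (x - 2) (x + 2) (by omega) (by omega) (by omega)
  -- in both cases `t(g-1) = t(g) = t(g+1)`
  obtain ⟨g, rfl | rfl⟩ : ∃ g, x = 2 * g + 2 ∨ x = 2 * g + 3 := ⟨(x - 2) / 2, by omega⟩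
  · rw [show 2 * g + 2 - 1 = 2 * g + 1 by omega, show 2 * g + 2 + 1 = 2 * (g + 1) + 1 by ring,
      tm_two_mul_add_one, tm_two_mul_add_one] at h1
    rw [show 2 * g + 2 - 2 = 2 * g by omega, show 2 * g + 2 + 2 = 2 * (g + 2) by ring,
      tm_two_mul, tm_two_mul] at h2
    have := tm_le_one g
    have := tm_le_one (g + 1)
    rcases tm_ne_or_ne_succ g with hne | hne <;> omega
  · rw [show 2 * g + 3 - 1 = 2 * (g + 1) by omega, show 2 * g + 3 + 1 = 2 * (g + 2) by ring,
      tm_two_mul, tm_two_mul] at h1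
    rw [show 2 * g + 3 - 2 = 2 * g + 1 by omega, show 2 * g + 3 + 2 = 2 * (g + 2) + 1 by ring,
      tm_two_mul_add_one, tm_two_mul_add_one] at h2
    have := tm_le_one g
    have := tm_le_one (g + 2)
    rcases tm_ne_or_ne_succ g with hne | hne <;> omega

/-- When `4 ∣ j + n` the reflection `i ↦ j + n - 1 - i` maps blocks of the morphism onto blocks,
so the palindrome desubstitutes. -/
theorem desubst (h : IsTMPal j n) (hjn : j < n) (hdvd : 4 ∣ j + n) :
    IsTMPal (j / 4) ((n + 3) / 4) := by
  intro q q' hq hq' hsum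
  obtain ⟨c, hc⟩ := hdvd
  have hk : j - 4 * q ≤ 3 := by omega
  have := (tm_four_mul_add_eq_iff (q := q) (q' := q') hk).mp
  rw [show 4 * q' + (3 - (j - 4 * q)) = j + n - 1 - (4 * q + (j - 4 * q)) by omega] at this
  exact this (h _ _ (by omega) (by omega) (by omega))

end IsTMPal

def pplRec (n : ℕ) : ℕ :=
  if _h : n = 0 then 0
  else if n % 4 = 0 then pplRec (n / 4)
  else if n % 4 = 1 then pplRec (n / 4) + 1
  else if n % 4 = 2 then min (pplRec (n / 4)) (pplRec (n / 4 + 1)) + 2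
  else pplRec (n / 4 + 1) + 1
decreasing_by all_goals omega

theorem pplRec_zero : pplRec 0 = 0 := by
  rw [pplRec]; simp

theorem pplRec_four_mul (m : ℕ) : pplRec (4 * m) = pplRec m := by
  rcases Nat.eq_zero_or_pos m with rfl | hm
  · rfl
  · rw [pplRec]
    simp [show 4 * m ≠ 0 by omega]

theorem pplRec_four_mul_add_one (m : ℕ) : pplRec (4 * m + 1) = pplRec m + 1 := by
  rw [pplRec]
  simp [show (4 * m + 1) % 4 = 1 by omega, show (4 * m + 1) / 4 = m by omega]

theorem pplRec_four_mul_add_two (m : ℕ) :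
    pplRec (4 * m + 2) = min (pplRec m) (pplRec (m + 1)) + 2 := by
  rw [pplRec]
  simp [show (4 * m + 2) % 4 = 2 by omega, show (4 * m + 2) / 4 = m by omega]

theorem pplRec_four_mul_add_three (m : ℕ) : pplRec (4 * m + 3) = pplRec (m + 1) + 1 := by
  rw [pplRec]
  simp [show (4 * m + 3) % 4 = 3 by omega, show (4 * m + 3) / 4 = m by omega]

theorem pplRec_one : pplRec 1 = 1 := by
  simpa [pplRec_zero] using pplRec_four_mul_add_one 0

theorem abs_pplRec_succ_sub_le_one (n : ℕ) : |(pplRec (n + 1) : ℤ) - pplRec n| ≤ 1 := by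
  induction n using Nat.strong_induction_on with
  | _ n ih =>
  rw [abs_le]
  obtain ⟨m, s, hs, rfl⟩ : ∃ m s, s < 4 ∧ n = 4 * m + s := ⟨n / 4, n % 4, by omega, by omega⟩
  interval_cases s
  · simp only [Nat.add_zero]
    rw [pplRec_four_mul_add_one, pplRec_four_mul]
    omega
  · rw [pplRec_four_mul_add_two, pplRec_four_mul_add_one]
    rcases Nat.eq_zero_or_pos m with rfl | hm
    · simp [pplRec_zero, pplRec_one]
    · have := abs_le.mp (ih m (by omega))
      omega
  · rw [pplRec_four_mul_add_three, pplRec_four_mul_add_two]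
    rcases Nat.eq_zero_or_pos m with rfl | hm
    · simp [pplRec_zero, pplRec_one]
    · have := abs_le.mp (ih m (by omega))
      omega
  · rw [show 4 * m + 3 + 1 = 4 * (m + 1) by ring, pplRec_four_mul, pplRec_four_mul_add_three]
    omega

/-- The blocks lying inside `t(j) ⋯ t(n-1)` are those of `(j + 3) / 4, …, n / 4 - 1`; the blocks
meeting it are those of `j / 4, …, (n + 3) / 4 - 1`. -/
theorem pplRec_le_of_desubst {j n : ℕ} (hjn : j < n) (hdvd : 4 ∣ j + n)
    (hin : (j + 3) / 4 ≤ n / 4 → pplRec (n / 4) ≤ pplRec ((j + 3) / 4) + 1)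
    (hout : pplRec ((n + 3) / 4) ≤ pplRec (j / 4) + 1) : pplRec n ≤ pplRec j + 1 := by
  obtain ⟨r, m, ⟨rfl, rfl⟩ | ⟨rfl, rfl⟩ | ⟨rfl, rfl⟩ | ⟨rfl, rfl⟩⟩ :
      ∃ r m, (j = 4 * r ∧ n = 4 * m) ∨ (j = 4 * r + 1 ∧ n = 4 * m + 3) ∨
        (j = 4 * r + 2 ∧ n = 4 * m + 2) ∨ (j = 4 * r + 3 ∧ n = 4 * m + 1) :=
    ⟨j / 4, n / 4, by omega⟩ <;>
  simp only [Nat.add_assoc, Nat.mul_add_div four_pos, Nat.mul_div_cancel_left _ four_pos,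
    Nat.reduceAdd, Nat.reduceDiv, Nat.add_zero] at hin hout
  · simpa only [pplRec_four_mul] using hout
  · rw [pplRec_four_mul_add_three, pplRec_four_mul_add_one]
    omega
  · rw [pplRec_four_mul_add_two, pplRec_four_mul_add_two]
    have := hin (by omega)
    omega
  · rw [pplRec_four_mul_add_one, pplRec_four_mul_add_three]
    have := hin (by omega)
    omega

theorem IsTMPal.pplRec_add_three_le {j : ℕ} (h : IsTMPal j (j + 3)) :
    pplRec (j + 3) ≤ pplRec j + 1 := by
  have hend := h j (j + 2) le_rfl (by omega) (by omega)
  obtain ⟨r, s, hs, rfl⟩ : ∃ r s, s < 4 ∧ j = 4 * r + s := ⟨j / 4, j % 4, by omega, by omega⟩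
  have := tm_le_one r
  interval_cases s
  · rw [Nat.add_zero, tm_four_mul, tm_four_mul_add_two] at hend
    omega
  · rw [tm_four_mul_add_one, tm_four_mul_add_three] at hend
    omega
  · rw [show 4 * r + 2 + 3 = 4 * (r + 1) + 1 by ring, pplRec_four_mul_add_one,
      pplRec_four_mul_add_two]
    have := abs_le.mp (abs_pplRec_succ_sub_le_one r)
    omega
  · rw [show 4 * r + 3 + 3 = 4 * (r + 1) + 2 by ring, pplRec_four_mul_add_two,
      pplRec_four_mul_add_three]
    omega

theorem pplRec_le_of_isTMPal (n : ℕ) :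
    ∀ j, IsTMPal j n → j ≤ n → pplRec n ≤ pplRec j + 1 := by
  induction n using Nat.strong_induction_on with
  | _ n ih =>
  intro j h hjn
  obtain rfl | hjn := hjn.eq_or_lt
  · exact Nat.le_succ _
  rcases Nat.even_or_odd (j + n) with heven | hodd
  · have hdvd := h.four_dvd_add hjn heven
    have hout := h.desubst hjn hdvd
    refine pplRec_le_of_desubst hjn hdvd (fun hle => ?_) (ih _ (by omega) _ hout (by omega))
    exact ih _ (by omega) _ (hout.mono (by omega) (by omega)) hle
  · have := h.le_add_three_of_odd hodd
    obtain ⟨x, hx⟩ := hodd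
    obtain rfl | rfl : n = j + 1 ∨ n = j + 3 := by omega
    · have := abs_le.mp (abs_pplRec_succ_sub_le_one j)
      omega
    · exact h.pplRec_add_three_le

/-- The Thue–Morse morphism `0 ↦ 0110`, `1 ↦ 1001`. -/
def tmBlock (a : ℕ) : List ℕ := [a, 1 - a, 1 - a, a]

theorem range_map_tm_succ (n : ℕ) :
    (List.range (n + 1)).map tm = (List.range n).map tm ++ [tm n] := by
  simp [List.range_succ]

theorem range_map_tm_four_mul (m : ℕ) :
    (List.range (4 * m)).map tm = ((List.range m).map tm).flatMap tmBlock := by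
  induction m with
  | zero => rfl
  | succ m ih =>
    rw [show 4 * (m + 1) = 4 * m + 3 + 1 by ring]
    simp only [range_map_tm_succ, ih, List.flatMap_append, List.flatMap_singleton, tmBlock,
      tm_four_mul, tm_four_mul_add_one, tm_four_mul_add_two, tm_four_mul_add_three,
      List.append_assoc, List.cons_append, List.nil_append]

theorem isTMPal_of_palindrome_drop {j n : ℕ}
    (h : (((List.range n).map tm).drop j).Palindrome) : IsTMPal j n := by
  intro i k hi hk hik
  have := congrArg (·[i - j]?) h.reverse_eq
  rw [List.getElem?_reverse (by simp; omega)] at this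
  simp only [List.getElem?_drop, List.getElem?_map, List.length_drop, List.length_map,
    List.length_range] at this
  rw [show j + (n - j - 1 - (i - j)) = k by omega, show j + (i - j) = i by omega,
    List.getElem?_range (by omega), List.getElem?_range (by omega)] at this
  simpa using this.symm

theorem pplTM_succ_le (n : ℕ) : pplTM (n + 1) ≤ pplTM n + 1 := by
  rw [pplTM, pplTM, range_map_tm_succ]
  exact (palLen_append_le _ _).trans (Nat.add_le_add_left (palLen_le_one (.singleton _)) _)

theorem pplTM_le_succ (n : ℕ) : pplTM n ≤ pplTM (n + 1) + 1 := by
  rw [pplTM, pplTM, range_map_tm_succ]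
  exact palLen_le_palLen_append_singleton _ _

theorem pplTM_four_mul_le (m : ℕ) : pplTM (4 * m) ≤ pplTM m := by
  rw [pplTM, pplTM, range_map_tm_four_mul]
  exact palLen_flatMap_le (fun a => ⟨by simp [tmBlock], .of_reverse_eq (by simp [tmBlock])⟩) _

theorem pplTM_four_mul_add_one_le (m : ℕ) : pplTM (4 * m + 1) ≤ pplTM m + 1 :=
  (pplTM_succ_le _).trans (Nat.add_le_add_right (pplTM_four_mul_le m) 1)

theorem pplTM_four_mul_add_three_le (m : ℕ) : pplTM (4 * m + 3) ≤ pplTM (m + 1) + 1 :=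
  (pplTM_le_succ _).trans (Nat.add_le_add_right (pplTM_four_mul_le (m + 1)) 1)

theorem pplTM_four_mul_add_two_le (m : ℕ) :
    pplTM (4 * m + 2) ≤ min (pplTM m) (pplTM (m + 1)) + 2 := by
  have : pplTM (4 * m + 2) ≤ pplTM (4 * m + 1) + 1 := pplTM_succ_le _
  have : pplTM (4 * m + 2) ≤ pplTM (4 * m + 3) + 1 := pplTM_le_succ _
  have := pplTM_four_mul_add_one_le m
  have := pplTM_four_mul_add_three_le m
  omega

theorem exists_isTMPal_pplTM_add_one_le {n : ℕ} (hn : 0 < n) :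
    ∃ j < n, IsTMPal j n ∧ pplTM j + 1 ≤ pplTM n := by
  obtain ⟨u, p, hup, hne, hp, hlen⟩ :=
    exists_append_palindrome_palLen_add_one_le (w := (List.range n).map tm)
      (by simpa using hn.ne')
  have hlen_up := congrArg List.length hup
  simp only [List.length_append, List.length_map, List.length_range] at hlen_up
  have hp_pos := List.length_pos_of_ne_nil hne
  refine ⟨u.length, by omega, isTMPal_of_palindrome_drop ?_, ?_⟩
  · rwa [← hup, List.drop_left]
  · have hu := congrArg (List.take u.length) hup
    rw [List.take_left, ← List.map_take, List.take_range, min_eq_left (by omega)] at hu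
    rwa [pplTM, ← hu]

theorem pplTM_eq_pplRec (n : ℕ) : pplTM n = pplRec n := by
  induction n using Nat.strong_induction_on with
  | _ n ih =>
  rcases Nat.eq_zero_or_pos n with rfl | hn
  · rw [pplTM, List.range_zero, List.map_nil, palLen_nil, pplRec_zero]
  refine le_antisymm ?_ ?_
  · obtain ⟨m, s, hs, rfl⟩ : ∃ m s, s < 4 ∧ n = 4 * m + s := ⟨n / 4, n % 4, by omega, by omega⟩
    interval_cases s
    · rw [Nat.add_zero, pplRec_four_mul, ← ih m (by omega)]
      exact pplTM_four_mul_le m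
    · rw [pplRec_four_mul_add_one, ← ih m (by omega)]
      exact pplTM_four_mul_add_one_le m
    · rw [pplRec_four_mul_add_two, ← ih m (by omega), ← ih (m + 1) (by omega)]
      exact pplTM_four_mul_add_two_le m
    · rw [pplRec_four_mul_add_three, ← ih (m + 1) (by omega)]
      exact pplTM_four_mul_add_three_le m
  · obtain ⟨j, hjn, hpal, hlen⟩ := exists_isTMPal_pplTM_add_one_le hn
    have := pplRec_le_of_isTMPal n j hpal hjn.le
    rw [ih j hjn] at hlen
    omega

/-- The sequence of first differences `d(n) = PPL_t(n+1) − PPL_t(n)` takes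
values in `{−1, 0, 1}` and is the fixed point of a 4-uniform morphism:
`d(4n) = 1`, `d(4n+1) = min(d(n), 0) + 1`, `d(4n+2) = max(d(n), 0) − 1`, and
`d(4n+3) = −1`. -/
theorem pplTM_first_differences_morphic (d : ℕ → ℤ)
    (hd : ∀ n, d n = (pplTM (n + 1) : ℤ) - (pplTM n : ℤ)) :
    ∀ n, d n ∈ ({-1, 0, 1} : Set ℤ) ∧
      d (4 * n) = 1 ∧
      d (4 * n + 1) = min (d n) 0 + 1 ∧
      d (4 * n + 2) = max (d n) 0 - 1 ∧
      d (4 * n + 3) = -1 := by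
  intro n
  have hlip := abs_le.mp (abs_pplRec_succ_sub_le_one n)
  simp only [hd, pplTM_eq_pplRec, Set.mem_insert_iff, Set.mem_singleton_iff,
    show 4 * n + 3 + 1 = 4 * (n + 1) by ring, pplRec_four_mul, pplRec_four_mul_add_one,
    pplRec_four_mul_add_two, pplRec_four_mul_add_three]
  push_cast
  omega
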